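/- Let H be a complex Hilbert space, X a closed subspace with orthogonal projection P_X, and k ≥ 1. Let 0 ≤ ε < 1/2 be such that the iterates δ^{∘j}(ε) are defined with δ^{∘j}(ε) < 1/2 for all 0 ≤ j ≤ k − 2, δ^{∘(k−1)}(ε) < 1, and ∏_{j=0}^{k−1} (1 + δ^{∘j}(ε))² ≤ 2. Let 𝒢 be a set of 2^k unitary operators on H such that for all U ≠ V in 𝒢 the subspaces U(X) and V(X) are ε-orthogonal. Then for every ξ ∈ H one has 2^k·‖P_X ξ‖² ≤ 2·Σ_{U ∈ 𝒢} ‖Uξ − ξ‖² + 4·‖ξ‖². -/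

import Mathlib

/-! Since a unitary `U` maps `P_X (U⁻¹ ξ)` to `P_{U(X)} ξ`, one has
`‖P_X ξ‖ ≤ ‖P_{U(X)} ξ‖ + ‖Uξ - ξ‖`; summing squares over `𝒢` reduces the claim to the
Bessel-type bound `∑_U ‖P_{U(X)} ξ‖² ≤ 2 ‖ξ‖²`. For `n` pairwise `ε`-orthogonal subspaces, the
Gram matrix of the vectors `P_i ξ` gives `‖∑ P_i ξ‖² ≤ (1 + ε (n - 1)) ∑ ‖P_i ξ‖²`, and
`∑ ‖P_i ξ‖² = re ⟪∑ P_i ξ, ξ⟫` with Cauchy–Schwarz turns this into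
`∑ ‖P_i ξ‖² ≤ (1 + ε (n - 1)) ‖ξ‖²`. Finally `ε (2^k - 1) ≤ 1`: on `[0, 1/2)` we have
`δ(x) ≥ 2x`, so `δ^{∘j}(ε) ≥ 2^j ε`, and `1 + ∑_j δ^{∘j}(ε) ≤ ∏_j (1 + δ^{∘j}(ε))² ≤ 2`. -/

open scoped ComplexInnerProductSpace

/-- The function `δ(ε) = 2ε / √(1 - ε - √2 ε √(1 - ε))` from Lemma 2.2. -/
noncomputable def deltaFun (ε : ℝ) : ℝ :=
  2 * ε / Real.sqrt (1 - ε - Real.sqrt 2 * ε * Real.sqrt (1 - ε))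

open Finset RCLike

lemma two_mul_le_deltaFun {x : ℝ} (hx₀ : 0 ≤ x) (hx : x < 1 / 2) : 2 * x ≤ deltaFun x := by
  have h1x : 0 < 1 - x := by linarith
  have hcross : Real.sqrt 2 * x * Real.sqrt (1 - x) < 1 - x := by
    refine lt_of_pow_lt_pow_left₀ 2 h1x.le ?_
    rw [mul_pow, mul_pow, Real.sq_sqrt zero_le_two, Real.sq_sqrt h1x.le]
    nlinarith [mul_pos (mul_pos h1x (show 0 < 1 - 2 * x by linarith)) (show 0 < 1 + x by linarith)]
  have hrad : 0 < 1 - x - Real.sqrt 2 * x * Real.sqrt (1 - x) := by linarith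
  have hcross₀ : 0 ≤ Real.sqrt 2 * x * Real.sqrt (1 - x) := by positivity
  exact le_div_self (by linarith) (Real.sqrt_pos.mpr hrad) (Real.sqrt_le_one.mpr (by linarith))

lemma two_pow_mul_le_iterate_deltaFun {ε : ℝ} (hε : 0 ≤ ε) {n : ℕ}
    (h : ∀ j < n, deltaFun^[j] ε < 1 / 2) : 2 ^ n * ε ≤ deltaFun^[n] ε := by
  induction n with
  | zero => simp
  | succ n ih =>
    have ih := ih fun j hj => h j (by omega)
    rw [Function.iterate_succ_apply', pow_succ', mul_assoc]
    exact (mul_le_mul_of_nonneg_left ih zero_le_two).trans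
      (two_mul_le_deltaFun ((by positivity : (0 : ℝ) ≤ 2 ^ n * ε).trans ih) (h n n.lt_succ_self))

lemma Finset.one_add_sum_le_prod_one_add {ι R : Type*} [CommSemiring R] [PartialOrder R]
    [IsOrderedRing R] (s : Finset ι) {f : ι → R} (hf : ∀ i ∈ s, 0 ≤ f i) :
    1 + ∑ i ∈ s, f i ≤ ∏ i ∈ s, (1 + f i) := by
  classical
  induction s using Finset.induction_on with
  | empty => simp
  | insert a s ha ih =>
    rw [sum_insert ha, prod_insert ha]
    have hfa := hf a (mem_insert_self a s)
    have hf' : ∀ i ∈ s, 0 ≤ f i := fun i hi => hf i (mem_insert_of_mem hi)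
    calc 1 + (f a + ∑ i ∈ s, f i) ≤ 1 + (f a + ∑ i ∈ s, f i) + f a * ∑ i ∈ s, f i :=
          le_add_of_nonneg_right (mul_nonneg hfa (sum_nonneg hf'))
      _ = (1 + f a) * (1 + ∑ i ∈ s, f i) := by ring
      _ ≤ (1 + f a) * ∏ i ∈ s, (1 + f i) :=
          mul_le_mul_of_nonneg_left (ih hf') (add_nonneg zero_le_one hfa)

lemma mul_two_pow_sub_one_le_one {ε : ℝ} {k : ℕ} (hε : 0 ≤ ε)
    (hiter : ∀ j, j ≤ k - 2 → deltaFun^[j] ε < 1 / 2)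
    (hprod : ∏ j ∈ range k, (1 + deltaFun^[j] ε) ^ 2 ≤ 2) :
    ε * ((2 ^ k - 1 : ℕ) : ℝ) ≤ 1 := by
  have hgrow : ∀ j ∈ range k, 2 ^ j * ε ≤ deltaFun^[j] ε := fun j hj =>
    two_pow_mul_le_iterate_deltaFun hε fun i hi => hiter i (by simp at hj; omega)
  have hnonneg : ∀ j ∈ range k, 0 ≤ deltaFun^[j] ε := fun j hj =>
    (by positivity : (0 : ℝ) ≤ 2 ^ j * ε).trans (hgrow j hj)
  have hprod₁ : 1 ≤ ∏ j ∈ range k, (1 + deltaFun^[j] ε) :=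
    one_le_prod fun j hj => le_add_of_nonneg_right (hnonneg j hj)
  calc ε * ((2 ^ k - 1 : ℕ) : ℝ) = ∑ j ∈ range k, 2 ^ j * ε := by
        have hgeom : ∑ j ∈ range k, 2 ^ j = 2 ^ k - 1 := by simpa using Nat.geomSum_eq le_rfl k
        rw [← sum_mul, mul_comm, ← hgeom]
        push_cast
        rfl
    _ ≤ ∑ j ∈ range k, deltaFun^[j] ε := sum_le_sum hgrow
    _ ≤ ∏ j ∈ range k, (1 + deltaFun^[j] ε) - 1 := by
        linarith [one_add_sum_le_prod_one_add (range k) hnonneg]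
    _ ≤ ∏ j ∈ range k, (1 + deltaFun^[j] ε) ^ 2 - 1 := by
        rw [prod_pow]
        linarith [le_self_pow₀ hprod₁ two_ne_zero]
    _ ≤ 1 := by linarith

section AlmostOrthogonal

open scoped InnerProductSpace

variable {𝕜 E ι : Type*} [RCLike 𝕜] [NormedAddCommGroup E] [InnerProductSpace 𝕜 E]

def Submodule.EpsOrthogonal (ε : ℝ) (K L : Submodule 𝕜 E) : Prop :=
  ∀ x ∈ K, ∀ y ∈ L, ‖⟪x, y⟫_𝕜‖ ≤ ε * ‖x‖ * ‖y‖

lemma norm_sum_sq_le_of_norm_inner_le {s : Finset ι} {v : ι → E} {ε : ℝ} (hε : 0 ≤ ε)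
    (h : (s : Set ι).Pairwise fun i j => ‖⟪v i, v j⟫_𝕜‖ ≤ ε * ‖v i‖ * ‖v j‖) :
    ‖∑ i ∈ s, v i‖ ^ 2 ≤ (1 + ε * ((#s - 1 : ℕ) : ℝ)) * ∑ i ∈ s, ‖v i‖ ^ 2 := by
  classical
  have hentry : ∀ i ∈ s, ∀ j ∈ s, ‖⟪v i, v j⟫_𝕜‖ ≤
      ε * ‖v i‖ * ‖v j‖ + if i = j then (1 - ε) * ‖v i‖ ^ 2 else 0 := by
    intro i hi j hj
    split_ifs with hij
    · subst hij
      rw [inner_self_eq_norm_sq_to_K, norm_pow, norm_ofReal, abs_norm]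
      exact le_of_eq (by ring)
    · simpa using h hi hj hij
  have hcard : (#s : ℝ) - 1 ≤ ((#s - 1 : ℕ) : ℝ) := by
    rw [sub_le_iff_le_add]
    exact_mod_cast (by omega : #s ≤ #s - 1 + 1)
  calc ‖∑ i ∈ s, v i‖ ^ 2 = ‖∑ i ∈ s, ∑ j ∈ s, ⟪v i, v j⟫_𝕜‖ := by
        simp_rw [← inner_sum, ← sum_inner, inner_self_eq_norm_sq_to_K, norm_pow, norm_ofReal,
          abs_norm]
    _ ≤ ∑ i ∈ s, ∑ j ∈ s, ‖⟪v i, v j⟫_𝕜‖ :=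
        (norm_sum_le _ _).trans (sum_le_sum fun i _ => norm_sum_le _ _)
    _ ≤ ∑ i ∈ s, ∑ j ∈ s,
          (ε * ‖v i‖ * ‖v j‖ + if i = j then (1 - ε) * ‖v i‖ ^ 2 else 0) :=
        sum_le_sum fun i hi => sum_le_sum fun j hj => hentry i hi j hj
    _ = ε * (∑ i ∈ s, ‖v i‖) ^ 2 + (1 - ε) * ∑ i ∈ s, ‖v i‖ ^ 2 := by
        rw [sq, sum_mul_sum, mul_sum, mul_sum, ← sum_add_distrib]
        refine sum_congr rfl fun i hi => ?_
        rw [sum_add_distrib, sum_ite_eq, if_pos hi, mul_sum]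
        simp only [mul_assoc]
    _ ≤ ε * (#s * ∑ i ∈ s, ‖v i‖ ^ 2) + (1 - ε) * ∑ i ∈ s, ‖v i‖ ^ 2 := by
        gcongr
        exact sq_sum_le_card_mul_sum_sq
    _ ≤ (1 + ε * ((#s - 1 : ℕ) : ℝ)) * ∑ i ∈ s, ‖v i‖ ^ 2 := by
        have := sum_nonneg fun i (_ : i ∈ s) => sq_nonneg ‖v i‖
        nlinarith [mul_le_mul_of_nonneg_left hcard hε]

lemma sum_norm_sq_starProjection_le {s : Finset ι} {K : ι → Submodule 𝕜 E}
    [∀ i, (K i).HasOrthogonalProjection] {ε : ℝ} (hε : 0 ≤ ε)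
    (h : (s : Set ι).Pairwise fun i j => (K i).EpsOrthogonal ε (K j)) (x : E) :
    ∑ i ∈ s, ‖(K i).starProjection x‖ ^ 2 ≤ (1 + ε * ((#s - 1 : ℕ) : ℝ)) * ‖x‖ ^ 2 := by
  set C := 1 + ε * ((#s - 1 : ℕ) : ℝ)
  set S := ∑ i ∈ s, ‖(K i).starProjection x‖ ^ 2
  set v := ∑ i ∈ s, (K i).starProjection x
  have hC : 1 ≤ C := le_add_of_nonneg_right (by positivity)
  have hS₀ : 0 ≤ S := sum_nonneg fun i _ => sq_nonneg _
  have hSv : S ≤ ‖v‖ * ‖x‖ := by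
    have hS : S = re ⟪v, x⟫_𝕜 := by
      simp only [S, v, sum_inner, map_sum, Submodule.re_inner_starProjection_eq_normSq]
      rfl
    exact hS ▸ re_inner_le_norm v x
  have hv : ‖v‖ ^ 2 ≤ C * S := norm_sum_sq_le_of_norm_inner_le hε fun i hi j hj hij =>
    h hi hj hij _ ((K i).starProjection_apply_mem x) _ ((K j).starProjection_apply_mem x)
  have hS_sq : S * S ≤ S * (C * ‖x‖ ^ 2) :=
    calc S * S ≤ ‖v‖ ^ 2 * ‖x‖ ^ 2 := by rw [← mul_pow, ← sq]; gcongr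
      _ ≤ C * S * ‖x‖ ^ 2 := by gcongr
      _ = S * (C * ‖x‖ ^ 2) := by ring
  rcases hS₀.eq_or_lt with hS | hS
  · rw [← hS]
    positivity
  · exact le_of_mul_le_mul_left hS_sq hS

lemma norm_starProjection_le_norm_starProjection_map_add (K : Submodule 𝕜 E)
    [K.HasOrthogonalProjection] (U : E ≃ₗᵢ[𝕜] E) (x : E) :
    ‖K.starProjection x‖ ≤
      ‖(K.map (U.toLinearEquiv : E →ₗ[𝕜] E)).starProjection x‖ + ‖U x - x‖ := by
  rw [Submodule.starProjection_map_apply, LinearIsometryEquiv.norm_map]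
  calc ‖K.starProjection x‖
      ≤ ‖K.starProjection (U.symm x)‖ + ‖K.starProjection x - K.starProjection (U.symm x)‖ :=
        norm_le_insert' _ _
    _ ≤ ‖K.starProjection (U.symm x)‖ + ‖x - U.symm x‖ := by
        rw [← map_sub]
        gcongr
        exact K.norm_starProjection_apply_le _
    _ = ‖K.starProjection (U.symm x)‖ + ‖U x - x‖ := by
        rw [← U.norm_map (x - U.symm x), map_sub, U.apply_symm_apply]

end AlmostOrthogonal

theorem pow_mul_norm_sq_proj_le_of_unitaries_general
    {H : Type*} [NormedAddCommGroup H] [InnerProductSpace ℂ H]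
    (X : Submodule ℂ H) [CompleteSpace X]
    (k : ℕ)
    (ε : ℝ) (hε₀ : 0 ≤ ε)
    (hiter : ∀ j, j ≤ k - 2 → deltaFun^[j] ε < 1 / 2)
    (hprod : ∏ j ∈ Finset.range k, (1 + deltaFun^[j] ε) ^ 2 ≤ 2)
    (𝒢 : Finset (H ≃ₗᵢ[ℂ] H)) (hcard : 𝒢.card = 2 ^ k)
    (horth : ∀ U ∈ 𝒢, ∀ V ∈ 𝒢, U ≠ V →
      ∀ ξ ∈ U '' (X : Set H), ∀ η ∈ V '' (X : Set H), ‖⟪ξ, η⟫‖ ≤ ε * ‖ξ‖ * ‖η‖) :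
    ∀ ξ : H,
      (2 : ℝ) ^ k * ‖(X.orthogonalProjection ξ : H)‖ ^ 2 ≤
        2 * ∑ U ∈ 𝒢, ‖U ξ - ξ‖ ^ 2 + 4 * ‖ξ‖ ^ 2 := by
  intro ξ
  have hbessel : ∑ U ∈ 𝒢, ‖(X.map (U.toLinearEquiv : H →ₗ[ℂ] H)).starProjection ξ‖ ^ 2 ≤
      2 * ‖ξ‖ ^ 2 := by
    refine (sum_norm_sq_starProjection_le hε₀ ?_ ξ).trans ?_
    · rintro U hU V hV hUV _ ⟨x, hx, rfl⟩ _ ⟨y, hy, rfl⟩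
      exact horth U hU V hV hUV _ ⟨x, hx, rfl⟩ _ ⟨y, hy, rfl⟩
    · have hε := mul_two_pow_sub_one_le_one hε₀ hiter hprod
      rw [← hcard] at hε
      gcongr
      linarith
  have hshift : ∀ U : H ≃ₗᵢ[ℂ] H, ‖X.starProjection ξ‖ ^ 2 ≤
      2 * ‖(X.map (U.toLinearEquiv : H →ₗ[ℂ] H)).starProjection ξ‖ ^ 2 + 2 * ‖U ξ - ξ‖ ^ 2 :=
    fun U => (pow_le_pow_left₀ (norm_nonneg _)
      (norm_starProjection_le_norm_starProjection_map_add X U ξ) 2).trans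
        (add_sq_le.trans_eq (by ring))
  calc (2 : ℝ) ^ k * ‖X.starProjection ξ‖ ^ 2 = ∑ _U ∈ 𝒢, ‖X.starProjection ξ‖ ^ 2 := by
        simp [hcard]
    _ ≤ ∑ U ∈ 𝒢, (2 * ‖(X.map (U.toLinearEquiv : H →ₗ[ℂ] H)).starProjection ξ‖ ^ 2 +
          2 * ‖U ξ - ξ‖ ^ 2) := sum_le_sum fun U _ => hshift U
    _ ≤ 2 * ∑ U ∈ 𝒢, ‖U ξ - ξ‖ ^ 2 + 4 * ‖ξ‖ ^ 2 := by
        rw [sum_add_distrib, ← mul_sum, ← mul_sum]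
        linarith

/-- If `𝒢` is a set of `2^k` unitaries of a complex Hilbert space `H` such that the
images `U(X)`, `V(X)` of a closed subspace `X` are pairwise `ε`-orthogonal (with the
iterates of `δ` at `ε` suitably controlled and `∏_{j<k} (1 + δ^{∘j}(ε))² ≤ 2`), then
`2^k ‖P_X ξ‖² ≤ 2 Σ_{U ∈ 𝒢} ‖Uξ - ξ‖² + 4 ‖ξ‖²` for every `ξ ∈ H`. -/
theorem pow_mul_norm_sq_proj_le_of_unitaries
    {H : Type*} [NormedAddCommGroup H] [InnerProductSpace ℂ H] [CompleteSpace H]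
    (X : Submodule ℂ H) (hX : IsClosed (X : Set H)) [CompleteSpace X]
    (k : ℕ) (hk : 1 ≤ k)
    (ε : ℝ) (hε₀ : 0 ≤ ε) (hε₁ : ε < 1 / 2)
    (hiter : ∀ j, j ≤ k - 2 → deltaFun^[j] ε < 1 / 2)
    (hlast : deltaFun^[k - 1] ε < 1)
    (hprod : ∏ j ∈ Finset.range k, (1 + deltaFun^[j] ε) ^ 2 ≤ 2)
    (𝒢 : Finset (H ≃ₗᵢ[ℂ] H)) (hcard : 𝒢.card = 2 ^ k)
    (horth : ∀ U ∈ 𝒢, ∀ V ∈ 𝒢, U ≠ V →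
      ∀ ξ ∈ U '' (X : Set H), ∀ η ∈ V '' (X : Set H), ‖⟪ξ, η⟫‖ ≤ ε * ‖ξ‖ * ‖η‖) :
    ∀ ξ : H,
      (2 : ℝ) ^ k * ‖(X.orthogonalProjection ξ : H)‖ ^ 2 ≤
        2 * ∑ U ∈ 𝒢, ‖U ξ - ξ‖ ^ 2 + 4 * ‖ξ‖ ^ 2 :=
  pow_mul_norm_sq_proj_le_of_unitaries_general X k ε hε₀ hiter hprod 𝒢 hcard horth
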